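/- arXiv:0805.2915 — 2 statements merged into one kernel-verified Lean document; each statement's English description precedes it below -/
import Mathlib

section
/- Let b : Q∨ × Q∨ → ℤ be a W-invariant symmetric even ℤ-bilinear form (i.e. b ∈ NS(R)). Then the unique ℚ-bilinear extension of b to V × V takes integer values on P∨ × Q∨ and on Q∨ × P∨; equivalently, for every x ∈ P∨ and every λ ∈ Q∨ one has b(x, λ) ∈ ℤ. (This is the paper's Lemma stating that every element of NS(M_G), for G simply connected, is integral on Λ_{T_{G^ad}} ⊗ Λ_{T_G} and on Λ_{T_G} ⊗ Λ_{T_{G^ad}}.) -/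
/-!
Since `s_α` sends `α∨` to `-α∨` and `x` to `x - α(x) α∨`, invariance of `b` under `s_α` gives
`2 b(x, α∨) = α(x) b(α∨, α∨)`. For a coweight `x` the factor `α(x)` is an integer and
`b(α∨, α∨)` is even, so `b(x, α∨) ∈ ℤ`; the coroots generate `Q∨`.
-/

open Module

theorem LinearMap.two_mul_apply_eq_of_reflection_invariant {R M : Type*} [CommRing R]
    [AddCommGroup M] [Module R M] (b : M →ₗ[R] M →ₗ[R] R) {x : M} {f : Dual R M}
    (h : f x = 2) (hb : ∀ y z, b (reflection h y) (reflection h z) = b y z)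
    (y : M) : 2 * b y x = f y * b x x := by
  have hinv := hb y x
  rw [reflection_apply_self, reflection_apply] at hinv
  simp only [map_neg, map_sub, map_smul, LinearMap.sub_apply, LinearMap.smul_apply,
    smul_eq_mul] at hinv
  linear_combination -hinv

theorem AddMonoidHom.exists_intCast_eq_of_mem_closure {M : Type*} [AddCommGroup M]
    (f : M →+ ℚ) {s : Set M} (hs : ∀ y ∈ s, ∃ n : ℤ, f y = n) {y : M}
    (hy : y ∈ AddSubgroup.closure s) : ∃ n : ℤ, f y = n := by
  have hle : AddSubgroup.closure s ≤ (Int.castAddHom ℚ).range.comap f :=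
    AddSubgroup.closure_le _ |>.2 fun z hz => (hs z hz).imp fun _ hn => hn.symm
  exact (hle hy).imp fun _ hn => hn.symm

theorem ns_form_integral_on_coweights_general
    (V : Type*) [AddCommGroup V] [Module ℚ V]
    (ι : Type*)
    (root : ι → (V →ₗ[ℚ] ℚ)) (coroot : ι → V)
    (hpair : ∀ i, root i (coroot i) = 2)
    (W : Subgroup (V ≃ₗ[ℚ] V))
    (hW : W = Subgroup.closure (Set.range fun i => Module.reflection (hpair i)))
    (Q : AddSubgroup V)
    (hQ : Q = AddSubgroup.closure (Set.range coroot))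
    (b : V →ₗ[ℚ] V →ₗ[ℚ] ℚ)
    (hsymm : ∀ x y : V, b x y = b y x)
    (hWinv : ∀ w ∈ W, ∀ x y : V, b (w x) (w y) = b x y)
    (heven : ∀ x ∈ Q, ∃ n : ℤ, b x x = 2 * (n : ℚ)) :
    ∀ x : V, (∀ i, ∃ n : ℤ, root i x = (n : ℚ)) →
      ∀ l ∈ Q, (∃ n : ℤ, b x l = (n : ℚ)) ∧ (∃ n : ℤ, b l x = (n : ℚ)) := by
  intro x hx l hl
  have hcoroot_mem : ∀ j, coroot j ∈ Q := fun j => hQ ▸ AddSubgroup.subset_closure ⟨j, rfl⟩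
  have hrefl_mem : ∀ j, reflection (hpair j) ∈ W := fun j => hW ▸ Subgroup.subset_closure ⟨j, rfl⟩
  have hcoroot : ∀ j, ∃ n : ℤ, b x (coroot j) = n := by
    intro j
    obtain ⟨m, hm⟩ := hx j
    obtain ⟨n, hn⟩ := heven _ (hcoroot_mem j)
    have h := b.two_mul_apply_eq_of_reflection_invariant (hpair j) (hWinv _ (hrefl_mem j)) x
    rw [hm, hn] at h
    exact ⟨m * n, by push_cast; linarith⟩
  have hxl : ∃ n : ℤ, b x l = n :=
    (b x).toAddMonoidHom.exists_intCast_eq_of_mem_closure (by rintro _ ⟨j, rfl⟩; exact hcoroot j)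
      (hQ ▸ hl)
  exact ⟨hxl, hsymm l x ▸ hxl⟩

/-- **Integrality of Néron–Severi forms on the coweight lattice.**
Let `R` be a reduced crystallographic root system spanning a finite-dimensional
`ℚ`-vector space `V` (roots realised as linear forms `root i : V →ₗ[ℚ] ℚ`,
coroots as vectors `coroot i : V`), with Weyl group `W` generated by the
reflections.  Let `Q` be the coroot lattice.  If `b` is (the `ℚ`-bilinear
extension of) a `W`-invariant symmetric even `ℤ`-bilinear form on `Q`, then
`b` takes integer values on `P∨ × Q` and on `Q × P∨`, where
`P∨ = {x : V | ∀ i, root i x ∈ ℤ}` is the coweight lattice. -/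
theorem ns_form_integral_on_coweights
    (V : Type*) [AddCommGroup V] [Module ℚ V] [FiniteDimensional ℚ V]
    (ι : Type*) [Fintype ι]
    (root : ι → (V →ₗ[ℚ] ℚ)) (coroot : ι → V)
    (hpair : ∀ i, root i (coroot i) = 2)
    (hcrys : ∀ i j, ∃ n : ℤ, root i (coroot j) = (n : ℚ))
    (hreduced : ∀ i j, (∃ c : ℚ, root j = c • root i) →
      root j = root i ∨ root j = -root i)
    (hrefl_co : ∀ i j, ∃ k, Module.reflection (hpair i) (coroot j) = coroot k)
    (hrefl_root : ∀ i j, ∃ k, ∀ x : V,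
      root j (Module.reflection (hpair i) x) = root k x)
    (hspan : Submodule.span ℚ (Set.range coroot) = ⊤)
    (W : Subgroup (V ≃ₗ[ℚ] V))
    (hW : W = Subgroup.closure (Set.range fun i => Module.reflection (hpair i)))
    (Q : AddSubgroup V)
    (hQ : Q = AddSubgroup.closure (Set.range coroot))
    (b : V →ₗ[ℚ] V →ₗ[ℚ] ℚ)
    (hsymm : ∀ x y : V, b x y = b y x)
    (hWinv : ∀ w ∈ W, ∀ x y : V, b (w x) (w y) = b x y)
    (hint : ∀ x ∈ Q, ∀ y ∈ Q, ∃ n : ℤ, b x y = (n : ℚ))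
    (heven : ∀ x ∈ Q, ∃ n : ℤ, b x x = 2 * (n : ℚ)) :
    ∀ x : V, (∀ i, ∃ n : ℤ, root i x = (n : ℚ)) →
      ∀ l ∈ Q, (∃ n : ℤ, b x l = (n : ℚ)) ∧ (∃ n : ℤ, b l x = (n : ℚ)) :=
  ns_form_integral_on_coweights_general V ι root coroot hpair W hW Q hQ b hsymm hWinv heven
end

section
/- Let b ∈ NS(R) and let δ̄ ∈ pr_V(Λ) ⊆ P∨. Then the following are equivalent: (a) there exists a homomorphism l_Z : Λ_Z → ℤ such that l_Z ⊕ b(−δ̄ ⊗ _) : Λ_Z ⊕ Q∨ → ℤ extends to a ℤ-linear map Λ → ℤ; (b) b(δ̄, λ) ∈ ℤ for every λ ∈ Λ ∩ V. (This is the combinatorial content, for genus g_C = 0, of the paper's Proposition describing the image of the projection NS(M_G^d) → NS(M_{G̃}): a form b lies in the image if and only if it is integral on (ℤδ̄) ⊗ Λ_{T_{G'}}, where Λ_{T_{G'}} = Λ ∩ V.) -/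
/-- `b` is (the `ℚ`-bilinear extension of) a `W`-invariant symmetric even
`ℤ`-bilinear form on the coroot lattice `Q`, i.e. an element of `NS(R)`. -/
def IsNSForm {V : Type*} [AddCommGroup V] [Module ℚ V]
    (W : Subgroup (V ≃ₗ[ℚ] V)) (Q : AddSubgroup V)
    (b : V →ₗ[ℚ] V →ₗ[ℚ] ℚ) : Prop :=
  (∀ x y : V, b x y = b y x) ∧
  (∀ w ∈ W, ∀ x y : V, b (w x) (w y) = b x y) ∧
  (∀ x ∈ Q, ∀ y ∈ Q, ∃ n : ℤ, b x y = (n : ℚ)) ∧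
  (∀ x ∈ Q, ∃ n : ℤ, b x x = 2 * (n : ℚ))

/-!
Condition (a) asks for an integral extension of `x ↦ b(-δ, pr_V x)` from `Λ ∩ V` to `Λ`, up to
adding a function of `pr_U x`. Since `Λ_Z ⊕ Q∨` has finite index `n` in `Λ`, such an extension
agrees with `b(-δ, _)` on `n • (Λ ∩ V)`, hence on `Λ ∩ V`, which gives (b). Conversely,
multiplication by `n` embeds `pr_U Λ` into `Λ_Z`, so `pr_U Λ` is finitely generated and
torsion-free, hence free; the projection `Λ → pr_U Λ` therefore splits, and `b(-δ, _)` composed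
with the resulting retraction of `Λ` onto `Λ ∩ V` is the extension.
-/

open Function

theorem AddMonoidHom.exists_lift_intCast {G : Type*} [AddGroup G] (g : G →+ ℚ)
    (hg : ∀ x, ∃ n : ℤ, g x = n) : ∃ L : G →+ ℤ, ∀ x, (L x : ℚ) = g x := by
  choose L hL using hg
  refine ⟨AddMonoidHom.mk' L fun x y => Int.cast_injective (α := ℚ) ?_, fun x => (hL x).symm⟩
  push_cast
  rw [← hL, ← hL, ← hL, map_add]

theorem AddMonoidHom.exists_intHom_eq_on_ker {G P : Type*} [AddCommGroup G] [AddCommGroup P]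
    [Module.Projective ℤ P] (φ : G →+ P) (hφ : Surjective φ) (g : G →+ ℚ)
    (hg : ∀ x, φ x = 0 → ∃ n : ℤ, g x = n) :
    ∃ L : G →+ ℤ, ∀ x, φ x = 0 → (L x : ℚ) = g x := by
  obtain ⟨σ, hσ⟩ := Module.projective_lifting_property φ.toIntLinearMap LinearMap.id hφ
  have hφσ : ∀ p, φ (σ p) = p := fun p => LinearMap.congr_fun hσ p
  let r : G →+ G := AddMonoidHom.id G - σ.toAddMonoidHom.comp φ
  have hr : ∀ x, φ (r x) = 0 := fun x => by simp [r, hφσ]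
  obtain ⟨L, hL⟩ := (g.comp r).exists_lift_intCast fun x => hg _ (hr x)
  refine ⟨L, fun x hx => ?_⟩
  simp [hL, r, hx]

theorem AddSubgroup.finite_of_nsmul_mem {U : Type*} [AddCommGroup U] [IsAddTorsionFree U]
    {A B : AddSubgroup U} [Module.Finite ℤ B] {n : ℕ} (hn : n ≠ 0) (h : ∀ u ∈ A, n • u ∈ B) :
    Module.Finite ℤ A := by
  let f : A →+ B := ((nsmulAddMonoidHom n).comp A.subtype).codRestrict B fun u => h u u.2
  refine Module.Finite.of_injective f.toIntLinearMap fun u v huv => ?_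
  exact Subtype.ext (nsmul_right_injective hn (congrArg Subtype.val huv))

section Lattice

variable {U V : Type*} [AddCommGroup U] [AddCommGroup V]
  {ΛZ : AddSubgroup U} {Q : AddSubgroup V} {Λ : AddSubgroup (U × V)}

theorem index_nsmul_mem_prod (x : Λ) :
    (((ΛZ.prod Q).addSubgroupOf Λ).index • x : U × V) ∈ ΛZ.prod Q :=
  AddSubgroup.mem_addSubgroupOf.1 (AddSubgroup.nsmul_index_mem _ x)

theorem finite_map_fst [IsAddTorsionFree U] [Module.Finite ℤ ΛZ]
    (hfin : ((ΛZ.prod Q).addSubgroupOf Λ).FiniteIndex) :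
    Module.Finite ℤ (Λ.map (AddMonoidHom.fst U V)) := by
  refine AddSubgroup.finite_of_nsmul_mem (B := ΛZ) hfin.index_ne_zero ?_
  rintro _ ⟨x, hx, rfl⟩
  exact (index_nsmul_mem_prod (Q := Q) ⟨x, hx⟩).1

theorem eq_on_ker_fst_of_eq_on_prod (hfin : ((ΛZ.prod Q).addSubgroupOf Λ).FiniteIndex)
    (f : V →+ ℚ) (lZ : ΛZ →+ ℤ) (L : Λ →+ ℤ)
    (hL : ∀ (x : Λ) (hz : (x : U × V).1 ∈ ΛZ), (x : U × V).2 ∈ Q →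
      (L x : ℚ) = lZ ⟨(x : U × V).1, hz⟩ + f (x : U × V).2)
    (x : Λ) (hx : (x : U × V).1 = 0) : (L x : ℚ) = f (x : U × V).2 := by
  set n := ((ΛZ.prod Q).addSubgroupOf Λ).index
  have hmem := index_nsmul_mem_prod (ΛZ := ΛZ) (Q := Q) x
  have hscaled := hL (n • x) hmem.1 hmem.2
  have hz : (⟨((n • x : Λ) : U × V).1, hmem.1⟩ : ΛZ) = 0 := Subtype.ext (by simp [hx])
  have hcast : ((L (n • x) : ℤ) : ℚ) = n • (L x : ℚ) := by simp
  rw [hz, map_zero, Int.cast_zero, zero_add, hcast, AddSubgroup.coe_nsmul, Prod.smul_snd,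
    map_nsmul] at hscaled
  exact nsmul_right_injective hfin.index_ne_zero hscaled

theorem exists_extension_of_integral_on_ker_fst (hsub : ΛZ.prod Q ≤ Λ)
    [Module.Projective ℤ (Λ.map (AddMonoidHom.fst U V))] (f : V →+ ℚ)
    (hf : ∀ x ∈ Λ, x.1 = 0 → ∃ n : ℤ, f x.2 = n) :
    ∃ lZ : ΛZ →+ ℤ, ∃ L : Λ →+ ℤ, ∀ (x : Λ) (hz : (x : U × V).1 ∈ ΛZ), (x : U × V).2 ∈ Q →
      (L x : ℚ) = lZ ⟨(x : U × V).1, hz⟩ + f (x : U × V).2 := by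
  have hfst : ∀ x : Λ, (AddMonoidHom.fst U V).addSubgroupMap Λ x = 0 ↔ (x : U × V).1 = 0 :=
    fun x => Subtype.ext_iff
  obtain ⟨L, hL⟩ := ((AddMonoidHom.fst U V).addSubgroupMap Λ).exists_intHom_eq_on_ker
    (AddMonoidHom.addSubgroupMap_surjective _ _) ((f.comp (AddMonoidHom.snd U V)).comp Λ.subtype)
    fun x hx => hf x x.2 ((hfst x).1 hx)
  let e : ΛZ →+ Λ := ((AddMonoidHom.inl U V).comp ΛZ.subtype).codRestrict Λ
    fun z => hsub ⟨z.2, Q.zero_mem⟩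
  refine ⟨L.comp e, L, fun x hz hq => ?_⟩
  let y : Λ := ⟨(0, (x : U × V).2), hsub ⟨ΛZ.zero_mem, hq⟩⟩
  have hsplit : L x = L (e ⟨_, hz⟩) + L y := by
    rw [← map_add]
    exact congrArg L (Subtype.ext (by simp [e, y]))
  rw [hsplit, Int.cast_add, hL y ((hfst y).2 rfl)]
  rfl

end Lattice

theorem ns_extension_iff_integral_on_lift_general
    (V : Type*) [AddCommGroup V] [Module ℚ V]
    (Q : AddSubgroup V)
    -- the lattices `Λ_Z ⊆ U` and `Λ_Z ⊕ Q ⊆ Λ ⊆ U ⊕ V`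
    (U : Type*) [AddCommGroup U] [Module ℚ U]
    (ΛZ : AddSubgroup U) (hΛZfg : ΛZ.FG)
    (Λ : AddSubgroup (U × V))
    (hsub : ΛZ.prod Q ≤ Λ)
    (hfin : ((ΛZ.prod Q).addSubgroupOf Λ).FiniteIndex)
    -- the data
    (b : V →ₗ[ℚ] V →ₗ[ℚ] ℚ)
    (δ : V) :
    (∃ lZ : ΛZ →+ ℤ, ∃ L : Λ →+ ℤ, ∀ (x : Λ) (hz : (x : U × V).1 ∈ ΛZ),
        (x : U × V).2 ∈ Q →
          ((L x : ℤ) : ℚ) = ((lZ ⟨(x : U × V).1, hz⟩ : ℤ) : ℚ) + b (-δ) (x : U × V).2)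
    ↔ (∀ x ∈ Λ, Prod.fst x = 0 → ∃ n : ℤ, b δ (Prod.snd x) = (n : ℚ)) := by
  have := IsAddTorsionFree.of_module_rat U
  have hnegδ : ∀ v, b (-δ) v = -b δ v := fun v => by rw [map_neg, LinearMap.neg_apply]
  constructor
  · rintro ⟨lZ, L, hL⟩ x hx hx1
    have h := eq_on_ker_fst_of_eq_on_prod hfin (b (-δ)).toAddMonoidHom lZ L hL ⟨x, hx⟩ hx1
    refine ⟨-L ⟨x, hx⟩, ?_⟩
    simp only [LinearMap.toAddMonoidHom_coe, hnegδ] at h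
    push_cast
    linarith
  · intro hint
    have : Module.Finite ℤ ΛZ :=
      Module.Finite.iff_addGroup_fg.2 ((AddGroup.fg_iff_addSubgroup_fg ΛZ).2 hΛZfg)
    have := finite_map_fst (Λ := Λ) hfin
    refine exists_extension_of_integral_on_ker_fst hsub (b (-δ)).toAddMonoidHom fun x hx hx1 => ?_
    obtain ⟨n, hn⟩ := hint x hx hx1
    exact ⟨-n, by simp [hn]⟩

/-- Let `b ∈ NS(R)` and `δ ∈ pr_V(Λ) ⊆ P∨`.  The following are equivalent:
(a) there is a homomorphism `lZ : Λ_Z → ℤ` such that `lZ ⊕ b(-δ ⊗ _)` extends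
to a `ℤ`-linear map `Λ → ℤ`; (b) `b(δ, λ) ∈ ℤ` for every `λ ∈ Λ ∩ V`. -/
theorem ns_extension_iff_integral_on_lift
    (V : Type*) [AddCommGroup V] [Module ℚ V] [FiniteDimensional ℚ V]
    (ι : Type*) [Fintype ι]
    (root : ι → (V →ₗ[ℚ] ℚ)) (coroot : ι → V)
    (hpair : ∀ i, root i (coroot i) = 2)
    (hcrys : ∀ i j, ∃ n : ℤ, root i (coroot j) = (n : ℚ))
    (hreduced : ∀ i j, (∃ c : ℚ, root j = c • root i) →
      root j = root i ∨ root j = -root i)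
    (hrefl_co : ∀ i j, ∃ k, Module.reflection (hpair i) (coroot j) = coroot k)
    (hrefl_root : ∀ i j, ∃ k, ∀ x : V,
      root j (Module.reflection (hpair i) x) = root k x)
    (hspan : Submodule.span ℚ (Set.range coroot) = ⊤)
    (W : Subgroup (V ≃ₗ[ℚ] V))
    (hW : W = Subgroup.closure (Set.range fun i => Module.reflection (hpair i)))
    (Q : AddSubgroup V)
    (hQ : Q = AddSubgroup.closure (Set.range coroot))
    -- the lattices `Λ_Z ⊆ U` and `Λ_Z ⊕ Q ⊆ Λ ⊆ U ⊕ V`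
    (U : Type*) [AddCommGroup U] [Module ℚ U] [FiniteDimensional ℚ U]
    (ΛZ : AddSubgroup U) (hΛZfg : ΛZ.FG)
    (Λ : AddSubgroup (U × V))
    (hsub : ΛZ.prod Q ≤ Λ)
    (hfin : ((ΛZ.prod Q).addSubgroupOf Λ).FiniteIndex)
    (hproj : ∀ x ∈ Λ, ∀ i, ∃ n : ℤ, root i (Prod.snd x) = (n : ℚ))
    -- the data
    (b : V →ₗ[ℚ] V →ₗ[ℚ] ℚ) (hb : IsNSForm W Q b)
    (δ : V) (hδ : ∃ u : U, (u, δ) ∈ Λ) :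
    (∃ lZ : ΛZ →+ ℤ, ∃ L : Λ →+ ℤ, ∀ (x : Λ) (hz : (x : U × V).1 ∈ ΛZ),
        (x : U × V).2 ∈ Q →
          ((L x : ℤ) : ℚ) = ((lZ ⟨(x : U × V).1, hz⟩ : ℤ) : ℚ) + b (-δ) (x : U × V).2)
    ↔ (∀ x ∈ Λ, Prod.fst x = 0 → ∃ n : ℤ, b δ (Prod.snd x) = (n : ℚ)) :=
  ns_extension_iff_integral_on_lift_general V Q U ΛZ hΛZfg Λ hsub hfin b δ
end
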